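/- arXiv:2008.05100 — 4 statements merged into one kernel-verified Lean document; each statement's English description precedes it below -/
import Mathlib

section
/- For initial state |0⟩_{S_A} (i.e. α_c = δ_{c,0}) and Alice's x=2 measurement given by the Fourier basis β_{c,a} = (1/√d) e^{i2πca/d}, the Baumann-Brukner prescription yields P(c|x=2) = 1/d for every c, while P(c|x=1) = δ_{c,0}. In particular for d ≥ 2, P(c|x=1) ≠ P(c|x=2), so the marginal distribution of Charlie's outcome depends on Alice's measurement choice. -/
/-!
Every Fourier amplitude has modulus `1/√d`, so the Fourier basis is unbiased with respect to the
computational basis. For a computational-basis initial state each overlap with a Fourier vector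
therefore has squared modulus `1/d`, and `P(c|x=2) = d · (1/d) · (1/d) = 1/d`, whereas
`P(c|x=1)` is the point mass at `0`.
-/

open scoped ComplexConjugate Real
open Finset

open Complex in
lemma normSq_fourier_entry (d c a : ℕ) :
    normSq ((1 / Real.sqrt d) * exp (2 * π * I * c * a / d)) = 1 / d := by
  have h_re : (2 * π * I * c * a / d).re = 0 := by
    simp [div_re]
  rw [map_mul, normSq_eq_norm_sq (exp _), norm_exp, h_re, Real.exp_zero, one_pow, mul_one,
    ← ofReal_one, ← ofReal_div, normSq_ofReal, ← sq, div_pow, one_pow,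
    Real.sq_sqrt d.cast_nonneg]

lemma sum_normSq_overlap_mul_normSq_of_unbiased {ι : Type*} [Fintype ι] [DecidableEq ι]
    (c₀ : ι) (β : ι → ι → ℂ)
    (hβ : ∀ c a, Complex.normSq (β c a) = 1 / Fintype.card ι) (c : ι) :
    ∑ a, Complex.normSq (∑ c', (if c' = c₀ then 1 else 0) * conj (β c' a)) *
      Complex.normSq (β c a) = 1 / Fintype.card ι := by
  have h_overlap : ∀ a, ∑ c', (if c' = c₀ then 1 else 0) * conj (β c' a) = conj (β c₀ a) := by
    simp
  have : Nonempty ι := ⟨c₀⟩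
  have hcard : (Fintype.card ι : ℝ) ≠ 0 := by positivity
  simp only [h_overlap, Complex.normSq_conj, hβ, sum_const, card_univ, nsmul_eq_mul]
  field_simp

/-- with initial state `|0⟩` (`α_c = δ_{c,0}`) and Alice's `x = 2`
measurement given by the Fourier basis `β_{c,a} = d^{-1/2} e^{i2πca/d}`, the
Baumann–Brukner prescription yields `P(c|x=2) = 1/d` for every `c`, while
`P(c|x=1) = δ_{c,0}`; in particular for `d ≥ 2` the two marginal distributions
of Charlie's outcome differ. -/
theorem BB_marginal_depends_on_setting (d : ℕ) (hd : 2 ≤ d)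
    (α : Fin d → ℂ) (hα : ∀ c, α c = if (c : ℕ) = 0 then 1 else 0)
    (β : Fin d → Fin d → ℂ)
    (hβ : ∀ c a, β c a = (1 / Real.sqrt d) *
      Complex.exp (2 * π * Complex.I * (c : ℕ) * (a : ℕ) / d))
    (P1 P2 : Fin d → ℝ)
    (hP1 : ∀ c, P1 c = Complex.normSq (α c))
    (hP2 : ∀ c, P2 c =
      ∑ a, Complex.normSq (∑ c', α c' * conj (β c' a)) * Complex.normSq (β c a)) :
    (∀ c, P2 c = 1 / d) ∧
    (∀ c, P1 c = if (c : ℕ) = 0 then 1 else 0) ∧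
    P1 ≠ P2 := by
  have : NeZero d := ⟨by omega⟩
  have hα₀ : α = fun c => if c = 0 then 1 else 0 := by
    ext c; simp only [hα, Fin.val_eq_zero_iff]
  have hβ_unbiased : ∀ c a, Complex.normSq (β c a) = 1 / Fintype.card (Fin d) := by
    intro c a; rw [hβ, Fintype.card_fin, normSq_fourier_entry]
  have hP2_uniform : ∀ c, P2 c = 1 / d := fun c => by
    rw [hP2, hα₀, sum_normSq_overlap_mul_normSq_of_unbiased 0 β hβ_unbiased, Fintype.card_fin]
  have hP1_delta : ∀ c, P1 c = if (c : ℕ) = 0 then 1 else 0 := fun c => by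
    rw [hP1, hα]; split_ifs <;> simp
  refine ⟨hP2_uniform, hP1_delta, fun h => ?_⟩
  have h_one : (1 : ℝ) = 1 / d := by simpa [hP1_delta, hP2_uniform] using congrFun h 0
  have hdR : (2 : ℝ) ≤ d := by exact_mod_cast hd
  rw [eq_div_iff (by positivity), one_mul] at h_one
  linarith
end

section
/- In Deutsch's thought experiment, the composition U₁† ∘ U₂ ∘ U₁ applied to |φ₀⟩_S|R⟩_{F_S}|R⟩_{F_M} yields the product state |φ₀⟩_S|R⟩_{F_S}|O⟩_{F_M}; consequently a subsequent projective measurement of S containing the projector onto |φ₀⟩ yields that outcome with probability 1. -/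
/-!
Each branch `|i⟩|R⟩|R⟩` is sent by `W₁` to `|i⟩|O_i⟩|R⟩`, by `W₂` to `|i⟩|O_i⟩|O⟩`, and this
is `W₁` applied to `|i⟩|R⟩|O⟩`; so `W₁⁻¹ W₂ W₁` maps `|i⟩|R⟩|R⟩` to `|i⟩|R⟩|O⟩`, and by
linearity `|φ₀⟩|R⟩|R⟩` to `|φ₀⟩|R⟩|O⟩`. Against the product basis `|φ₀⟩|j⟩|l⟩` this state has
amplitudes `RS j * OM l`, whose squared moduli sum to `‖RS‖² ‖OM‖² = 1`.
-/

open scoped ComplexConjugate InnerProductSpace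
open Finset

/-- Threefold tensor product of vectors: `S ⊗ F_S ⊗ F_M`. -/
noncomputable def tpT {n m k : ℕ} (s : EuclideanSpace ℂ (Fin n))
    (f : EuclideanSpace ℂ (Fin m)) (g : EuclideanSpace ℂ (Fin k)) :
    EuclideanSpace ℂ (Fin n × Fin m × Fin k) :=
  WithLp.toLp 2 (fun p : Fin n × Fin m × Fin k => s p.1 * f p.2.1 * g p.2.2)

section TensorProduct

variable {n m k : ℕ}

lemma tpT_add_left (x y : EuclideanSpace ℂ (Fin n)) (f : EuclideanSpace ℂ (Fin m))
    (g : EuclideanSpace ℂ (Fin k)) : tpT (x + y) f g = tpT x f g + tpT y f g := by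
  ext p
  simp only [tpT, PiLp.add_apply]
  ring

lemma tpT_smul_left (a : ℂ) (x : EuclideanSpace ℂ (Fin n)) (f : EuclideanSpace ℂ (Fin m))
    (g : EuclideanSpace ℂ (Fin k)) : tpT (a • x) f g = a • tpT x f g := by
  ext p
  simp only [tpT, PiLp.toLp_apply, PiLp.smul_apply, smul_eq_mul]
  ring

lemma inner_tpT_tpT (x x' : EuclideanSpace ℂ (Fin n)) (f f' : EuclideanSpace ℂ (Fin m))
    (g g' : EuclideanSpace ℂ (Fin k)) :
    ⟪tpT x f g, tpT x' f' g'⟫_ℂ = ⟪x, x'⟫_ℂ * ⟪f, f'⟫_ℂ * ⟪g, g'⟫_ℂ := by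
  simp only [PiLp.inner_apply, RCLike.inner_apply, tpT, Fintype.sum_prod_type, map_mul]
  rw [mul_assoc, Finset.sum_mul_sum, Finset.sum_mul_sum]
  simp_rw [Finset.mul_sum]
  refine Finset.sum_congr rfl fun i _ => Finset.sum_congr rfl fun j _ =>
    Finset.sum_congr rfl fun l _ => ?_
  ring

lemma sum_normSq_inner_tpT_single {φ : EuclideanSpace ℂ (Fin n)} (hφ : ‖φ‖ = 1)
    (f : EuclideanSpace ℂ (Fin m)) (g : EuclideanSpace ℂ (Fin k)) :
    ∑ j : Fin m, ∑ l : Fin k,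
      Complex.normSq ⟪tpT φ (EuclideanSpace.single j (1:ℂ))
        (EuclideanSpace.single l (1:ℂ)), tpT φ f g⟫_ℂ = ‖f‖ ^ 2 * ‖g‖ ^ 2 := by
  have hφφ : ⟪φ, φ⟫_ℂ = 1 := by simp [inner_self_eq_norm_sq_to_K, hφ]
  simp only [inner_tpT_tpT, hφφ, EuclideanSpace.inner_single_left, map_one, one_mul,
    Complex.normSq_mul]
  rw [← Finset.sum_mul_sum]
  simp only [EuclideanSpace.norm_sq_eq, Complex.normSq_eq_norm_sq]

end TensorProduct

lemma norm_sq_smul_add_smul_of_orthonormal {E : Type*} [NormedAddCommGroup E]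
    [InnerProductSpace ℂ E] {e0 e1 : E} (he0 : ‖e0‖ = 1) (he1 : ‖e1‖ = 1) (h : ⟪e0, e1⟫_ℂ = 0)
    (α β : ℂ) : ‖α • e0 + β • e1‖ ^ 2 = Complex.normSq α + Complex.normSq β := by
  rw [@norm_add_sq ℂ, inner_smul_left, inner_smul_right, h, mul_zero, mul_zero,
    map_zero, mul_zero, add_zero, norm_smul, norm_smul, he0, he1, Complex.normSq_eq_norm_sq,
    Complex.normSq_eq_norm_sq]
  ring

theorem deutsch_reversal_general {m k : ℕ}
    (e0 e1 : EuclideanSpace ℂ (Fin 2))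
    (he0 : ‖e0‖ = 1) (he1 : ‖e1‖ = 1) (hS : ⟪e0, e1⟫_ℂ = 0)
    (RS O0 O1 : EuclideanSpace ℂ (Fin m))
    (hRS : ‖RS‖ = 1)
    (RM OM : EuclideanSpace ℂ (Fin k)) (hOM : ‖OM‖ = 1)
    (α β : ℂ) (hnorm : Complex.normSq α + Complex.normSq β = 1)
    (φ₀ : EuclideanSpace ℂ (Fin 2)) (hφ₀ : φ₀ = α • e0 + β • e1)
    (W₁ W₂ : EuclideanSpace ℂ (Fin 2 × Fin m × Fin k) ≃ₗᵢ[ℂ]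
      EuclideanSpace ℂ (Fin 2 × Fin m × Fin k))
    -- W₁ acts as U₁ ⊗ 1, with U₁|i⟩|R⟩ = |i⟩|O_i⟩:
    (hW₁0 : ∀ g, W₁ (tpT e0 RS g) = tpT e0 O0 g)
    (hW₁1 : ∀ g, W₁ (tpT e1 RS g) = tpT e1 O1 g)
    -- W₂ acts as 1 ⊗ U₂, with U₂|R⟩|R⟩ = |R⟩|R⟩ and U₂|O_i⟩|R⟩ = |O_i⟩|O⟩:
    (hW₂0 : ∀ s, W₂ (tpT s O0 RM) = tpT s O0 OM)
    (hW₂1 : ∀ s, W₂ (tpT s O1 RM) = tpT s O1 OM) :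
    W₁.symm (W₂ (W₁ (tpT φ₀ RS RM))) = tpT φ₀ RS OM ∧
    ∑ j : Fin m, ∑ l : Fin k,
      Complex.normSq ⟪tpT φ₀ (EuclideanSpace.single j (1:ℂ))
        (EuclideanSpace.single l (1:ℂ)), W₁.symm (W₂ (W₁ (tpT φ₀ RS RM)))⟫_ℂ = 1 := by
  have branch0 : W₂ (W₁ (tpT e0 RS RM)) = W₁ (tpT e0 RS OM) := by rw [hW₁0, hW₂0, hW₁0]
  have branch1 : W₂ (W₁ (tpT e1 RS RM)) = W₁ (tpT e1 RS OM) := by rw [hW₁1, hW₂1, hW₁1]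
  have reversal : W₁.symm (W₂ (W₁ (tpT φ₀ RS RM))) = tpT φ₀ RS OM := by
    simp only [hφ₀, tpT_add_left, tpT_smul_left, map_add, map_smul, branch0, branch1,
      LinearIsometryEquiv.symm_apply_apply]
  have hφ₀_norm : ‖φ₀‖ = 1 := by
    rw [← pow_eq_one_iff_of_nonneg (norm_nonneg _) two_ne_zero, hφ₀,
      norm_sq_smul_add_smul_of_orthonormal he0 he1 hS, hnorm]
  refine ⟨reversal, ?_⟩
  rw [reversal, sum_normSq_inner_tpT_single hφ₀_norm, hRS, hOM]
  norm_num

/-- in Deutsch's thought experiment the composition `U₁† ∘ U₂ ∘ U₁`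
applied to `|φ₀⟩|R⟩|R⟩` yields the product state `|φ₀⟩|R⟩|O⟩`; consequently a
subsequent projective measurement of `S` containing the projector onto `|φ₀⟩`
yields that outcome with probability 1. Here `W₁ = U₁ ⊗ 1_{F_M}` and
`W₂ = 1_S ⊗ U₂` are the extensions of the unitaries `U₁` (on `S ⊗ F_S`) and
`U₂` (on `F_S ⊗ F_M`) to the total space. -/
theorem deutsch_reversal {m k : ℕ}
    (e0 e1 : EuclideanSpace ℂ (Fin 2))
    (he0 : ‖e0‖ = 1) (he1 : ‖e1‖ = 1) (hS : ⟪e0, e1⟫_ℂ = 0)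
    (RS O0 O1 : EuclideanSpace ℂ (Fin m))
    (hRS : ‖RS‖ = 1) (hO0 : ‖O0‖ = 1) (hO1 : ‖O1‖ = 1) (hO : ⟪O0, O1⟫_ℂ = 0)
    (RM OM : EuclideanSpace ℂ (Fin k)) (hRM : ‖RM‖ = 1) (hOM : ‖OM‖ = 1)
    (α β : ℂ) (hnorm : Complex.normSq α + Complex.normSq β = 1)
    (φ₀ : EuclideanSpace ℂ (Fin 2)) (hφ₀ : φ₀ = α • e0 + β • e1)
    (W₁ W₂ : EuclideanSpace ℂ (Fin 2 × Fin m × Fin k) ≃ₗᵢ[ℂ]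
      EuclideanSpace ℂ (Fin 2 × Fin m × Fin k))
    -- W₁ acts as U₁ ⊗ 1, with U₁|i⟩|R⟩ = |i⟩|O_i⟩:
    (hW₁0 : ∀ g, W₁ (tpT e0 RS g) = tpT e0 O0 g)
    (hW₁1 : ∀ g, W₁ (tpT e1 RS g) = tpT e1 O1 g)
    -- W₂ acts as 1 ⊗ U₂, with U₂|R⟩|R⟩ = |R⟩|R⟩ and U₂|O_i⟩|R⟩ = |O_i⟩|O⟩:
    (hW₂R : ∀ s, W₂ (tpT s RS RM) = tpT s RS RM)
    (hW₂0 : ∀ s, W₂ (tpT s O0 RM) = tpT s O0 OM)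
    (hW₂1 : ∀ s, W₂ (tpT s O1 RM) = tpT s O1 OM) :
    W₁.symm (W₂ (W₁ (tpT φ₀ RS RM))) = tpT φ₀ RS OM ∧
    ∑ j : Fin m, ∑ l : Fin k,
      Complex.normSq ⟪tpT φ₀ (EuclideanSpace.single j (1:ℂ))
        (EuclideanSpace.single l (1:ℂ)), W₁.symm (W₂ (W₁ (tpT φ₀ RS RM)))⟫_ℂ = 1 :=
  deutsch_reversal_general e0 e1 he0 he1 hS RS O0 O1 hRS RM OM hOM α β hnorm φ₀ hφ₀ W₁ W₂ hW₁0 hW₁1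
    hW₂0 hW₂1
end

section
/- In Deutsch's thought experiment with an objective collapse after the friend's measurement, the post-reversal state is |0⟩_S|R⟩_{F_S}|O⟩_{F_M} with probability |α|² or |1⟩_S|R⟩_{F_S}|O⟩_{F_M} with probability |β|², so the probability of Wigner obtaining the outcome [φ₀]_S in measurement M₂ is |α|⁴ + |β|⁴, which is strictly less than 1 whenever αβ ≠ 0. Hence collapse and no-collapse give different predictions for M₂. -/
/-!
Under collapse each branch `|i⟩|O_i⟩|R⟩` is a product state: `U₂` only writes the friend's record
into `F_M`, and `U₁†` undoes the friend's measurement, leaving `|i⟩|R⟩|O⟩`. The Born weight of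
`[φ₀]` in branch `i` is `|⟨φ₀|i⟩|² = |α_i|²`, so the total is `|α|⁴ + |β|⁴ = 1 - 2|α|²|β|² < 1`.
-/

open scoped ComplexConjugate InnerProductSpace

theorem sq_add_sq_lt_one_of_add_eq_one {a b : ℝ} (ha : 0 < a) (hb : 0 < b) (hab : a + b = 1) :
    a ^ 2 + b ^ 2 < 1 := by
  have hsq : a ^ 2 + b ^ 2 = (a + b) ^ 2 - 2 * (a * b) := by ring
  rw [hsq, hab, one_pow]
  linarith [mul_pos ha hb]

section Superposition

variable {𝕜 E : Type*} [RCLike 𝕜] [NormedAddCommGroup E] [InnerProductSpace 𝕜 E]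

theorem inner_smul_add_smul_left_of_norm_eq_one {x y : E} (hx : ‖x‖ = 1) (hxy : ⟪x, y⟫_𝕜 = 0)
    (α β : 𝕜) : ⟪α • x + β • y, x⟫_𝕜 = conj α := by
  have hxx : ⟪x, x⟫_𝕜 = 1 := by
    rw [inner_self_eq_norm_sq_to_K, hx]; norm_num
  have hyx : ⟪y, x⟫_𝕜 = 0 := inner_eq_zero_symm.mp hxy
  rw [inner_add_left, inner_smul_left, inner_smul_left, hxx, hyx]
  ring

theorem inner_smul_add_smul_left_of_norm_eq_one' {x y : E} (hy : ‖y‖ = 1) (hxy : ⟪x, y⟫_𝕜 = 0)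
    (α β : 𝕜) : ⟪α • x + β • y, y⟫_𝕜 = conj β := by
  rw [add_comm]
  exact inner_smul_add_smul_left_of_norm_eq_one hy (inner_eq_zero_symm.mp hxy) β α

end Superposition

theorem deutsch_collapse_prediction_general {m k : ℕ}
    (e0 e1 : EuclideanSpace ℂ (Fin 2))
    (he0 : ‖e0‖ = 1) (he1 : ‖e1‖ = 1) (hS : ⟪e0, e1⟫_ℂ = 0)
    (RS O0 O1 : EuclideanSpace ℂ (Fin m))
    (RM OM : EuclideanSpace ℂ (Fin k))
    (α β : ℂ) (hnorm : Complex.normSq α + Complex.normSq β = 1)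
    (hαβ : α * β ≠ 0)
    (φ₀ : EuclideanSpace ℂ (Fin 2)) (hφ₀ : φ₀ = α • e0 + β • e1)
    (W₁ W₂ : EuclideanSpace ℂ (Fin 2 × Fin m × Fin k) ≃ₗᵢ[ℂ]
      EuclideanSpace ℂ (Fin 2 × Fin m × Fin k))
    (hW₁0 : ∀ g, W₁ (tpT e0 RS g) = tpT e0 O0 g)
    (hW₁1 : ∀ g, W₁ (tpT e1 RS g) = tpT e1 O1 g)
    (hW₂0 : ∀ s, W₂ (tpT s O0 RM) = tpT s O0 OM)
    (hW₂1 : ∀ s, W₂ (tpT s O1 RM) = tpT s O1 OM) :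
    -- post-reversal states of the two collapse branches:
    W₁.symm (W₂ (tpT e0 O0 RM)) = tpT e0 RS OM ∧
    W₁.symm (W₂ (tpT e1 O1 RM)) = tpT e1 RS OM ∧
    -- probability of outcome [φ₀] in M₂ under collapse:
    Complex.normSq α * Complex.normSq ⟪φ₀, e0⟫_ℂ
      + Complex.normSq β * Complex.normSq ⟪φ₀, e1⟫_ℂ
      = Complex.normSq α ^ 2 + Complex.normSq β ^ 2 ∧
    Complex.normSq α ^ 2 + Complex.normSq β ^ 2 < 1 := by
  obtain ⟨hα, hβ⟩ := mul_ne_zero_iff.mp hαβ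
  refine ⟨?_, ?_, ?_, ?_⟩
  · rw [hW₂0, W₁.symm_apply_eq, hW₁0]
  · rw [hW₂1, W₁.symm_apply_eq, hW₁1]
  · rw [hφ₀, inner_smul_add_smul_left_of_norm_eq_one he0 hS,
      inner_smul_add_smul_left_of_norm_eq_one' he1 hS, Complex.normSq_conj, Complex.normSq_conj]
    ring
  · exact sq_add_sq_lt_one_of_add_eq_one (Complex.normSq_pos.mpr hα)
      (Complex.normSq_pos.mpr hβ) hnorm

/-- in Deutsch's experiment with objective collapse after the
friend's measurement, the post-reversal state in branch `i` is `|i⟩|R⟩|O⟩`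
(occurring with probability `|α|²` resp. `|β|²`), so the probability of
Wigner obtaining outcome `[φ₀]` in the measurement `M₂` is
`|α|²·|⟨φ₀|0⟩|² + |β|²·|⟨φ₀|1⟩|² = |α|⁴ + |β|⁴ < 1` whenever `αβ ≠ 0`;
hence collapse and no-collapse give different predictions for `M₂`. -/
theorem deutsch_collapse_prediction {m k : ℕ}
    (e0 e1 : EuclideanSpace ℂ (Fin 2))
    (he0 : ‖e0‖ = 1) (he1 : ‖e1‖ = 1) (hS : ⟪e0, e1⟫_ℂ = 0)
    (RS O0 O1 : EuclideanSpace ℂ (Fin m))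
    (hRS : ‖RS‖ = 1) (hO0 : ‖O0‖ = 1) (hO1 : ‖O1‖ = 1) (hO : ⟪O0, O1⟫_ℂ = 0)
    (RM OM : EuclideanSpace ℂ (Fin k)) (hRM : ‖RM‖ = 1) (hOM : ‖OM‖ = 1)
    (α β : ℂ) (hnorm : Complex.normSq α + Complex.normSq β = 1)
    (hαβ : α * β ≠ 0)
    (φ₀ : EuclideanSpace ℂ (Fin 2)) (hφ₀ : φ₀ = α • e0 + β • e1)
    (W₁ W₂ : EuclideanSpace ℂ (Fin 2 × Fin m × Fin k) ≃ₗᵢ[ℂ]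
      EuclideanSpace ℂ (Fin 2 × Fin m × Fin k))
    (hW₁0 : ∀ g, W₁ (tpT e0 RS g) = tpT e0 O0 g)
    (hW₁1 : ∀ g, W₁ (tpT e1 RS g) = tpT e1 O1 g)
    (hW₂R : ∀ s, W₂ (tpT s RS RM) = tpT s RS RM)
    (hW₂0 : ∀ s, W₂ (tpT s O0 RM) = tpT s O0 OM)
    (hW₂1 : ∀ s, W₂ (tpT s O1 RM) = tpT s O1 OM) :
    -- post-reversal states of the two collapse branches:
    W₁.symm (W₂ (tpT e0 O0 RM)) = tpT e0 RS OM ∧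
    W₁.symm (W₂ (tpT e1 O1 RM)) = tpT e1 RS OM ∧
    -- probability of outcome [φ₀] in M₂ under collapse:
    Complex.normSq α * Complex.normSq ⟪φ₀, e0⟫_ℂ
      + Complex.normSq β * Complex.normSq ⟪φ₀, e1⟫_ℂ
      = Complex.normSq α ^ 2 + Complex.normSq β ^ 2 ∧
    Complex.normSq α ^ 2 + Complex.normSq β ^ 2 < 1 :=
  deutsch_collapse_prediction_general e0 e1 he0 he1 hS RS O0 O1 RM OM α β hnorm hαβ φ₀ hφ₀ W₁ W₂
    hW₁0 hW₁1 hW₂0 hW₂1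
end

section
/- If a bipartite correlation P(a,b|x,y) violates some Local Friendliness (partially deterministic) inequality, then it also violates some Bell inequality (lies outside the Bell-local polytope); the converse fails: there exist correlations inside the partially deterministic polytope but outside the Bell-local polytope (for suitable finite scenarios, e.g., when x=1 is the only setting with deterministic response, and x≥2 responses are unconstrained no-signalling). -/
/-!
A Bell-local model is a mixture of product boxes with deterministic responses; such a box is
no-signalling and deterministic at every setting, in particular at `x₁`, so `L ⊆ D`.
Conversely, with three settings for Alice, let her answer deterministically at `x = 0` and share
a PR box with Bob at `x ∈ {1, 2}`, `y ∈ {0, 1}`. This single no-signalling box lies in `D`, but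
its CHSH value is `4`, while every Bell-local correlation has CHSH value at most `2`.
-/

open Finset

/-- The Local Friendliness (partially deterministic) set: convex mixtures over a
hidden variable `λ` of no-signalling boxes `P(a,b|x,y,λ)` whose Alice-marginal
at the setting `x₁` (= 1) is deterministic; the responses at the other settings
are unconstrained no-signalling. -/
def LFset {X Y A B : Type*} [Fintype A] [Fintype B] (x₁ : X) :
    Set (X → Y → A → B → ℝ) :=
  {p | ∃ (M : ℕ) (q : Fin M → ℝ) (Pl : Fin M → X → Y → A → B → ℝ),
    (∀ l, 0 ≤ q l) ∧ (∑ l, q l = 1) ∧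
    (∀ l x y a b, 0 ≤ Pl l x y a b) ∧
    (∀ l x y, ∑ a, ∑ b, Pl l x y a b = 1) ∧
    -- no-signalling in both directions:
    (∀ l x y y' a, ∑ b, Pl l x y a b = ∑ b, Pl l x y' a b) ∧
    (∀ l x x' y b, ∑ a, Pl l x y a b = ∑ a, Pl l x' y a b) ∧
    -- Alice's response at x = x₁ is deterministic given λ:
    (∀ l y a, (∑ b, Pl l x₁ y a b = 0) ∨ (∑ b, Pl l x₁ y a b = 1)) ∧
    (∀ x y a b, p x y a b = ∑ l, q l * Pl l x y a b)}

/-- The Bell-local polytope: convex mixtures of products of (deterministic)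
local response functions. -/
def BellLocal (X Y A B : Type*) [Fintype A] [Fintype B] :
    Set (X → Y → A → B → ℝ) :=
  {p | ∃ (M : ℕ) (q : Fin M → ℝ) (PA : Fin M → X → A → ℝ) (PB : Fin M → Y → B → ℝ),
    (∀ l, 0 ≤ q l) ∧ (∑ l, q l = 1) ∧
    (∀ l x, ∑ a, PA l x a = 1) ∧ (∀ l y, ∑ b, PB l y b = 1) ∧
    (∀ l x a, PA l x a = 0 ∨ PA l x a = 1) ∧
    (∀ l y b, PB l y b = 0 ∨ PB l y b = 1) ∧
    (∀ x y a b, p x y a b = ∑ l, q l * PA l x a * PB l y b)}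


namespace LocalFriendliness

section Inclusion

variable {X Y A B : Type*} [Fintype A] [Fintype B]

lemma nonneg_of_eq_zero_or_eq_one {r : ℝ} (h : r = 0 ∨ r = 1) : 0 ≤ r := by
  rcases h with h | h <;> simp [h]

theorem bellLocal_subset_LFset (x₁ : X) : BellLocal X Y A B ⊆ LFset x₁ := by
  rintro p ⟨M, q, PA, PB, hq0, hq1, hPA1, hPB1, hPA01, hPB01, hp⟩
  refine ⟨M, q, fun l x y a b => PA l x a * PB l y b, hq0, hq1, ?_, ?_, ?_, ?_, ?_, ?_⟩
  · intro l x y a b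
    exact mul_nonneg (nonneg_of_eq_zero_or_eq_one (hPA01 l x a))
      (nonneg_of_eq_zero_or_eq_one (hPB01 l y b))
  · intro l x y
    rw [← sum_mul_sum, hPA1, hPB1, one_mul]
  · intro l x y y' a
    rw [← mul_sum, ← mul_sum, hPB1, hPB1]
  · intro l x x' y b
    rw [← sum_mul, ← sum_mul, hPA1, hPA1]
  · intro l y a
    rw [← mul_sum, hPB1, mul_one]
    exact hPA01 l x₁ a
  · intro x y a b
    simp only [hp, mul_assoc]

theorem mem_LFset_of_noSignalling {x₁ : X} {p : X → Y → A → B → ℝ}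
    (h_nonneg : ∀ x y a b, 0 ≤ p x y a b) (h_sum : ∀ x y, ∑ a, ∑ b, p x y a b = 1)
    (h_nsA : ∀ x y y' a, ∑ b, p x y a b = ∑ b, p x y' a b)
    (h_nsB : ∀ x x' y b, ∑ a, p x y a b = ∑ a, p x' y a b)
    (h_det : ∀ y a, ∑ b, p x₁ y a b = 0 ∨ ∑ b, p x₁ y a b = 1) :
    p ∈ LFset x₁ :=
  ⟨1, fun _ => 1, fun _ => p, fun _ => zero_le_one, by simp, fun _ => h_nonneg,
    fun _ => h_sum, fun _ => h_nsA, fun _ => h_nsB, fun _ => h_det, by simp⟩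

end Inclusion

section CHSH

variable {X Y : Type*}

/-- The correlator `E(x,y) = ⟨(-1)^a (-1)^b⟩`. -/
def correlator (p : X → Y → Fin 2 → Fin 2 → ℝ) (x : X) (y : Y) : ℝ :=
  p x y 0 0 - p x y 0 1 - p x y 1 0 + p x y 1 1

def chsh (p : X → Y → Fin 2 → Fin 2 → ℝ) (x x' : X) (y y' : Y) : ℝ :=
  correlator p x y + correlator p x y' + correlator p x' y - correlator p x' y'

lemma chsh_le_two_of_abs_le_one {s t u v : ℝ} (hs : |s| ≤ 1) (ht : |t| ≤ 1) (hu : |u| ≤ 1)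
    (hv : |v| ≤ 1) : s * u + s * v + t * u - t * v ≤ 2 := by
  have h₁ : s * (u + v) ≤ |u + v| :=
    (le_abs_self _).trans (by rw [abs_mul]; exact mul_le_of_le_one_left (abs_nonneg _) hs)
  have h₂ : t * (u - v) ≤ |u - v| :=
    (le_abs_self _).trans (by rw [abs_mul]; exact mul_le_of_le_one_left (abs_nonneg _) ht)
  have h₃ : |u + v| + |u - v| ≤ 2 := by
    rw [abs_le] at hu hv
    rcases abs_cases (u + v) with ⟨h, _⟩ | ⟨h, _⟩ <;>
      rcases abs_cases (u - v) with ⟨h', _⟩ | ⟨h', _⟩ <;> linarith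
  linarith

lemma abs_sub_le_one_of_sum_eq_one {f : Fin 2 → ℝ} (h_nonneg : ∀ i, 0 ≤ f i)
    (h_sum : ∑ i, f i = 1) : |f 0 - f 1| ≤ 1 := by
  rw [Fin.sum_univ_two] at h_sum
  have := h_nonneg 0
  have := h_nonneg 1
  rw [abs_le]
  constructor <;> linarith

theorem chsh_le_two_of_mem_bellLocal {p : X → Y → Fin 2 → Fin 2 → ℝ}
    (hp : p ∈ BellLocal X Y (Fin 2) (Fin 2)) (x x' : X) (y y' : Y) :
    chsh p x x' y y' ≤ 2 := by
  obtain ⟨M, q, PA, PB, hq0, hq1, hPA1, hPB1, hPA01, hPB01, hp⟩ := hp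
  set s : Fin M → X → ℝ := fun l x => PA l x 0 - PA l x 1
  set t : Fin M → Y → ℝ := fun l y => PB l y 0 - PB l y 1
  have hs (l x) : |s l x| ≤ 1 :=
    abs_sub_le_one_of_sum_eq_one (fun a => nonneg_of_eq_zero_or_eq_one (hPA01 l x a)) (hPA1 l x)
  have ht (l y) : |t l y| ≤ 1 :=
    abs_sub_le_one_of_sum_eq_one (fun b => nonneg_of_eq_zero_or_eq_one (hPB01 l y b)) (hPB1 l y)
  have h_corr (x y) : correlator p x y = ∑ l, q l * (s l x * t l y) := by
    simp only [correlator, hp, ← sum_sub_distrib, ← sum_add_distrib, s, t]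
    exact sum_congr rfl fun l _ => by ring
  calc chsh p x x' y y'
      = ∑ l, q l * (s l x * t l y + s l x * t l y' + s l x' * t l y - s l x' * t l y') := by
        simp only [chsh, h_corr, ← sum_sub_distrib, ← sum_add_distrib]
        exact sum_congr rfl fun l _ => by ring
    _ ≤ ∑ l, q l * 2 :=
        sum_le_sum fun l _ => mul_le_mul_of_nonneg_left
          (chsh_le_two_of_abs_le_one (hs l x) (hs l x') (ht l y) (ht l y')) (hq0 l)
    _ = 2 := by rw [← sum_mul, hq1, one_mul]

end CHSH

/-- At `x = 0` Alice outputs `0` and Bob is uniform; at `x ∈ {1, 2}` the box is the PR box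
`a = b ⊕ [x = 2 ∧ y = 1]`, extended to `y = 2` by `a = b`. -/
noncomputable def prBoxWithDeterministicSetting : Fin 3 → Fin 3 → Fin 2 → Fin 2 → ℝ :=
  fun x y a b =>
    if x = 0 then (if a = 0 then 1/2 else 0)
    else if a = b + (if x = 2 ∧ y = 1 then 1 else 0) then 1/2 else 0

lemma prBoxWithDeterministicSetting_sum_right (x y : Fin 3) (a : Fin 2) :
    ∑ b, prBoxWithDeterministicSetting x y a b = if x = 0 then (if a = 0 then 1 else 0) else 1/2 := by
  fin_cases x <;> fin_cases y <;> fin_cases a <;>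
    simp [prBoxWithDeterministicSetting, Fin.sum_univ_two]

lemma prBoxWithDeterministicSetting_sum_left (x y : Fin 3) (b : Fin 2) :
    ∑ a, prBoxWithDeterministicSetting x y a b = 1/2 := by
  fin_cases x <;> fin_cases y <;> fin_cases b <;>
    simp [prBoxWithDeterministicSetting]

theorem prBoxWithDeterministicSetting_mem_LFset : prBoxWithDeterministicSetting ∈ LFset 0 := by
  refine mem_LFset_of_noSignalling (fun x y a b => ?_) (fun x y => ?_) (fun x y y' a => ?_)
    (fun x x' y b => ?_) (fun y a => ?_)
  · unfold prBoxWithDeterministicSetting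
    split_ifs <;> norm_num
  · simp only [prBoxWithDeterministicSetting_sum_right]
    fin_cases x <;> simp
  · rw [prBoxWithDeterministicSetting_sum_right, prBoxWithDeterministicSetting_sum_right]
  · rw [prBoxWithDeterministicSetting_sum_left, prBoxWithDeterministicSetting_sum_left]
  · rw [prBoxWithDeterministicSetting_sum_right, if_pos rfl]
    split_ifs <;> simp

lemma chsh_prBoxWithDeterministicSetting : chsh prBoxWithDeterministicSetting 1 2 0 1 = 4 := by
  norm_num [chsh, correlator, prBoxWithDeterministicSetting, Fin.ext_iff,
    show (1 + 1 : Fin 2) = 0 from rfl]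

theorem prBoxWithDeterministicSetting_not_mem_bellLocal :
    prBoxWithDeterministicSetting ∉ BellLocal (Fin 3) (Fin 3) (Fin 2) (Fin 2) := fun h => by
  have := chsh_le_two_of_mem_bellLocal h 1 2 0 1
  rw [chsh_prBoxWithDeterministicSetting] at this
  norm_num at this

end LocalFriendliness

open LocalFriendliness in
/-- any correlation violating a Local Friendliness (partially
deterministic) inequality also violates a Bell inequality (`L ⊆ D`, stated
contrapositively); the converse fails: for a suitable finite scenario with at
least 2 settings and 2 outcomes per side, there is a correlation inside the
partially deterministic polytope but outside the Bell-local polytope. -/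
theorem LF_violation_implies_Bell_violation_but_not_conversely :
    (∀ {X Y A B : Type} [Fintype X] [Fintype Y] [Fintype A] [Fintype B] (x₁ : X)
      (p : X → Y → A → B → ℝ),
      p ∉ LFset (X := X) (Y := Y) (A := A) (B := B) x₁ → p ∉ BellLocal X Y A B) ∧
    (∃ (N K : ℕ) (hN : 2 ≤ N) (_hK : 2 ≤ K)
      (p : Fin N → Fin N → Fin K → Fin K → ℝ),
      p ∈ LFset (X := Fin N) (Y := Fin N) (A := Fin K) (B := Fin K)
          (⟨0, by omega⟩ : Fin N) ∧
      p ∉ BellLocal (Fin N) (Fin N) (Fin K) (Fin K)) :=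
  ⟨fun x₁ _ hLF hBell => hLF (bellLocal_subset_LFset x₁ hBell),
    3, 2, by norm_num, by norm_num, prBoxWithDeterministicSetting,
    prBoxWithDeterministicSetting_mem_LFset, prBoxWithDeterministicSetting_not_mem_bellLocal⟩
end
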